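/- arXiv:2512.07256 — 2 statements merged into one kernel-verified Lean document; each statement's English description precedes it below -/
import Mathlib

section
/- Let q be a prime power and m ≥ 2 an integer. Then for ℓ = 1 we have ⌊((q^{2m}-1)/(q²-1) - 1)/q^{2m-2}⌋ ≥ 1, and (q^{2m}-1)/(q²-1) - 2·(1 + log_{q²}(1 + ((q^{2m}-1)/(q²-1) - q^{2m-2})(q²-1))) = (q^{2m}-1)/(q²-1) - 2m. -/
/-! The quotient `(q^{2m}-1)/(q²-1)` is the geometric sum `∑_{i<m} Q^i` with `Q = q²`.
Removing its top term `Q^{m-1}` leaves `∑_{i<m-1} Q^i`, which still contains the term `1`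
(this gives the first claim), and `1 + (∑_{i<m-1} Q^i)(Q-1) = Q^{m-1}`, whose base-`Q`
logarithm is `m - 1` (this gives the second). -/

open Finset

theorem one_add_pow_pred_le_geom_sum {R : Type*} [Semiring R] [PartialOrder R]
    [IsOrderedRing R] {x : R} (hx : 0 ≤ x) {m : ℕ} (hm : 2 ≤ m) :
    1 + x ^ (m - 1) ≤ ∑ i ∈ range m, x ^ i := by
  obtain ⟨n, rfl⟩ : ∃ n, m = n + 2 := ⟨m - 2, by omega⟩
  rw [show n + 2 - 1 = n + 1 by omega, sum_range_succ]
  gcongr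
  simpa using single_le_sum (fun i _ => pow_nonneg hx i) (mem_range.2 n.succ_pos)

theorem geom_sum_sub_pow_pred {R : Type*} [Ring R] (x : R) {m : ℕ} (hm : 1 ≤ m) :
    ∑ i ∈ range m, x ^ i - x ^ (m - 1) = ∑ i ∈ range (m - 1), x ^ i := by
  obtain ⟨n, rfl⟩ : ∃ n, m = n + 1 := ⟨m - 1, by omega⟩
  rw [sum_range_succ, add_tsub_cancel_right, add_sub_cancel_right]

theorem one_add_geom_sum_mul_sub_one {R : Type*} [Ring R] (x : R) (n : ℕ) :
    1 + (∑ i ∈ range n, x ^ i) * (x - 1) = x ^ n := by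
  rw [geom_sum_mul, add_sub_cancel]

/-- For a prime power `q` and `m ≥ 2`: at `ℓ = 1` we have
`⌊((q^{2m}-1)/(q²-1) - 1)/q^{2m-2}⌋ ≥ 1`, and the pure Sphere-packing-like bound for
the quantum Hamming LRC is attained with equality:
`(q^{2m}-1)/(q²-1) - 2(1 + log_{q²}(1 + ((q^{2m}-1)/(q²-1) - q^{2m-2})(q²-1)))
  = (q^{2m}-1)/(q²-1) - 2m`. -/
theorem quantum_hamming_sphere_packing_equality (q m : ℕ) (hq : IsPrimePow q)
    (hm : 2 ≤ m) :
    1 ≤ ((q ^ (2 * m) - 1) / (q ^ 2 - 1) - 1) / q ^ (2 * m - 2) ∧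
    (((q ^ (2 * m) - 1) / (q ^ 2 - 1) : ℕ) : ℝ) -
        2 * (1 + Real.logb ((q : ℝ) ^ 2)
          (1 + ((((q ^ (2 * m) - 1) / (q ^ 2 - 1) : ℕ) : ℝ) - (q : ℝ) ^ (2 * m - 2)) *
            ((q : ℝ) ^ 2 - 1))) =
      (((q ^ (2 * m) - 1) / (q ^ 2 - 1) : ℕ) : ℝ) - 2 * m := by
  have hQ : 2 ≤ q ^ 2 := le_trans hq.two_le (Nat.le_self_pow two_ne_zero q)
  have hN : (q ^ (2 * m) - 1) / (q ^ 2 - 1) = ∑ i ∈ range m, (q ^ 2) ^ i := by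
    rw [pow_mul, Nat.geomSum_eq hQ]
  have hexp : 2 * m - 2 = 2 * (m - 1) := by omega
  refine ⟨?_, ?_⟩
  · have h := one_add_pow_pred_le_geom_sum (Nat.zero_le (q ^ 2)) hm
    rw [hN, hexp, pow_mul, Nat.le_div_iff_mul_le (by positivity)]
    omega
  · have hQ' : (1 : ℝ) < (q : ℝ) ^ 2 := by exact_mod_cast hQ
    rw [hN, hexp, pow_mul]
    push_cast
    rw [geom_sum_sub_pow_pred _ (by omega), one_add_geom_sum_mul_sub_one, Real.logb_pow,
      Real.logb_self_eq_one hQ', Nat.cast_sub (by omega)]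
    ring
end

section
/- Let q ≥ 2, r ≥ 1, t with 1 ≤ t ≤ r, and n, κ, δ positive integers. Suppose n ≥ ℓ(r+1) + Σ_{i=0}^{k-ℓr-1} ⌈δ/q^{2i}⌉ holds for ℓ = (n+κ)/(2r) - 1 (assumed to be a nonnegative integer) and k = (n+κ)/2 (assumed a positive integer with k - ℓr = r). Then n ≥ ((r+1)/(2r))·n + ((r+1)/(2r))·κ + ((q^{2t}-1)/(q^{2t}-q^{2t-2}))·δ - (t+1), as rational numbers. -/
open Finset

/-! Bound each of the `r` ceilings `⌈δ / q^{2i}⌉` below by `δ / q^{2i}` for `i < t` and by `1`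
for `t ≤ i < r`. The first `t` terms sum to `δ` times a geometric sum in `q⁻²`, which is the
coefficient of `δ`, and the remaining `r - t` ones, together with `ℓ (r + 1)` rewritten through
`n + κ`, give the other terms. -/

theorem geom_sum_inv_succ_eq {K : Type*} [Field K] {a : K} (ha0 : a ≠ 0) (ha1 : a ≠ 1)
    (m : ℕ) : ∑ i ∈ range (m + 1), (a ^ i)⁻¹ = (a ^ (m + 1) - 1) / (a ^ (m + 1) - a ^ m) := by
  have ha1' : a - 1 ≠ 0 := sub_ne_zero.mpr ha1
  simp_rw [← inv_pow]
  rw [geom_sum_inv ha1 ha0, inv_pow, show a ^ (m + 1) - a ^ m = a ^ m * (a - 1) by ring]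
  field_simp
  ring

theorem sum_add_le_sum_range_ceil {α : Type*} [Field α] [LinearOrder α]
    [IsStrictOrderedRing α] [FloorRing α] {f : ℕ → α} (hf : ∀ i, 0 < f i) {t r : ℕ}
    (htr : t ≤ r) : ∑ i ∈ range t, f i + (r - t : ℕ) ≤ ∑ i ∈ range r, (⌈f i⌉ : α) := by
  rw [← sum_range_add_sum_Ico _ htr]
  gcongr with i
  · exact Int.le_ceil _
  · have hone : (r - t : ℕ) • (1 : α) ≤ ∑ i ∈ Ico t r, (⌈f i⌉ : α) :=
      Nat.card_Ico t r ▸ card_nsmul_le_sum _ _ _ fun i _ ↦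
        mod_cast Int.one_le_ceil_iff.mpr (hf i)
    simpa using hone

theorem pure_griesmer_asymptotic_form_general (q r t n κ δ ℓ k : ℕ)
    (hq : 2 ≤ q) (hr : 1 ≤ r) (ht1 : 1 ≤ t) (htr : t ≤ r)
    (hδ : 0 < δ)
    (hℓ : (ℓ : ℚ) = ((n : ℚ) + κ) / (2 * r) - 1)
    (hkr : k - ℓ * r = r)
    (hbound : (n : ℤ) ≥ (ℓ : ℤ) * (r + 1) +
      ∑ i ∈ range (k - ℓ * r), ⌈(δ : ℚ) / (q : ℚ) ^ (2 * i)⌉) :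
    (n : ℚ) ≥ (((r : ℚ) + 1) / (2 * r)) * n + (((r : ℚ) + 1) / (2 * r)) * κ +
      (((q : ℚ) ^ (2 * t) - 1) / ((q : ℚ) ^ (2 * t) - (q : ℚ) ^ (2 * t - 2))) * δ -
      (t + 1) := by
  obtain ⟨m, rfl⟩ : ∃ m, t = m + 1 := ⟨t - 1, by omega⟩
  have hq2 : (1 : ℚ) < (q : ℚ) ^ 2 := one_lt_pow₀ (by exact_mod_cast hq) two_ne_zero
  have hceil := sum_add_le_sum_range_ceil (f := fun i ↦ (δ : ℚ) / (q : ℚ) ^ (2 * i))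
    (fun i ↦ by positivity) htr
  have hgeom : ∑ i ∈ range (m + 1), (δ : ℚ) / (q : ℚ) ^ (2 * i) =
      (((q : ℚ) ^ (2 * (m + 1)) - 1) /
        ((q : ℚ) ^ (2 * (m + 1)) - (q : ℚ) ^ (2 * (m + 1) - 2))) * δ := by
    simp_rw [show 2 * (m + 1) - 2 = 2 * m by omega, pow_mul, div_eq_mul_inv (δ : ℚ),
      ← mul_sum, geom_sum_inv_succ_eq (by positivity) hq2.ne', mul_comm]
  have hℓr : (ℓ : ℚ) * (r + 1) =
      ((r : ℚ) + 1) / (2 * r) * n + ((r : ℚ) + 1) / (2 * r) * κ - (r + 1) := by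
    rw [hℓ]
    field_simp
  rw [hkr] at hbound
  have hboundℚ :
      (ℓ : ℚ) * (r + 1) + ∑ i ∈ range r, (⌈(δ : ℚ) / (q : ℚ) ^ (2 * i)⌉ : ℚ) ≤ n :=
    mod_cast hbound
  push_cast [htr] at hceil ⊢
  linarith

/-- Asymptotic pure Griesmer-like bound derivation: if `ℓ = (n+κ)/(2r) - 1` and
`k = (n+κ)/2` are nonnegative integers with `k - ℓr = r`, and
`n ≥ ℓ(r+1) + Σ_{i=0}^{k-ℓr-1} ⌈δ/q^{2i}⌉`, then for every `1 ≤ t ≤ r`,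
`n ≥ ((r+1)/(2r))·n + ((r+1)/(2r))·κ + ((q^{2t}-1)/(q^{2t}-q^{2t-2}))·δ - (t+1)`. -/
theorem pure_griesmer_asymptotic_form (q r t n κ δ ℓ k : ℕ)
    (hq : 2 ≤ q) (hr : 1 ≤ r) (ht1 : 1 ≤ t) (htr : t ≤ r)
    (hn : 0 < n) (hκ : 0 < κ) (hδ : 0 < δ)
    (hℓ : (ℓ : ℚ) = ((n : ℚ) + κ) / (2 * r) - 1)
    (hk : (k : ℚ) = ((n : ℚ) + κ) / 2)
    (hkr : k - ℓ * r = r)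
    (hbound : (n : ℤ) ≥ (ℓ : ℤ) * (r + 1) +
      ∑ i ∈ range (k - ℓ * r), ⌈(δ : ℚ) / (q : ℚ) ^ (2 * i)⌉) :
    (n : ℚ) ≥ (((r : ℚ) + 1) / (2 * r)) * n + (((r : ℚ) + 1) / (2 * r)) * κ +
      (((q : ℚ) ^ (2 * t) - 1) / ((q : ℚ) ^ (2 * t) - (q : ℚ) ^ (2 * t - 2))) * δ -
      (t + 1) :=
  pure_griesmer_asymptotic_form_general q r t n κ δ ℓ k hq hr ht1 htr hδ hℓ hkr hbound
end
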